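/- arXiv:2112.13912 — 3 statements merged into one kernel-verified Lean document; each statement's English description precedes it below -/
import Mathlib

section
/- Let n ≥ 3 be odd and let L be an order-n Latin square. Then L has inner distance (n−1)/2 if and only if there exist s ∈ ZMod n and r, c ∈ ZMod n with r, c ∈ {(n−1)/2 mod n, (n+1)/2 mod n} such that L(i,j) = s + r·i + c·j for all i, j (where i, j are interpreted in ZMod n). -/
/-- Distance between two symbols of `ZMod n`: the minimum of the two cyclic differences. -/
def zdist {n : ℕ} (a b : ZMod n) : ℕ := min (a - b).val (b - a).val

/-- An order-`n` Latin square: every row and every column is injective. -/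
def IsLatin (n : ℕ) (L : Fin n → Fin n → ZMod n) : Prop :=
  (∀ i, Function.Injective (L i)) ∧ ∀ j, Function.Injective fun i => L i j

/-- The inner distance of a square: the minimum of `zdist` over all pairs of
horizontally or vertically adjacent cells. -/
noncomputable def innerDist (n : ℕ) (L : Fin n → Fin n → ZMod n) : ℕ :=
  sInf { d : ℕ |
    (∃ i : Fin n, ∃ j : ℕ, ∃ hj : j + 1 < n,
      d = zdist (L i ⟨j, Nat.lt_of_succ_lt hj⟩) (L i ⟨j + 1, hj⟩)) ∨
    (∃ j : Fin n, ∃ i : ℕ, ∃ hi : i + 1 < n,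
      d = zdist (L ⟨i, Nat.lt_of_succ_lt hi⟩ j) (L ⟨i + 1, hi⟩ j)) }


/-!
For odd `n = 2k + 1`, no two symbols of `ZMod n` are at distance more than `k`, and they are at
distance exactly `k` iff they differ by `±k`. So inner distance `k` means that every horizontal
and vertical step of `L` is `±k`. Two consecutive steps `k, -k` in a row or column would repeat
a symbol, so every row and every column is an arithmetic progression. The row step then varies
linearly down the columns, and the column step linearly along the rows, with the same increment
`δ`. The steps `r₀, r₀ + δ, r₀ + 2δ` of the first three columns all lie in `{k, -k}`, and since
`2` is invertible this forces `δ = 0`. Hence `L` is affine.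
-/

open Function

def StepsIn {G : Type*} [AddCommGroup G] {n : ℕ} (S : Set G) (f : Fin n → G) : Prop :=
  ∀ (j : ℕ) (hj : j + 1 < n), f ⟨j + 1, hj⟩ - f ⟨j, Nat.lt_of_succ_lt hj⟩ ∈ S

section Steps

variable {G : Type*} [AddCommGroup G] {n : ℕ} {f : Fin n → G}

theorem StepsIn.mono {S T : Set G} (h : StepsIn S f) (hST : S ⊆ T) : StepsIn T f :=
  fun j hj => hST (h j hj)

theorem StepsIn.eq_add_nsmul {d : G} (h : StepsIn {d} f) (j : Fin n) :
    f j = f ⟨0, j.pos⟩ + (j : ℕ) • d := by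
  obtain ⟨j, hj⟩ := j
  induction j with
  | zero => simp
  | succ j ih =>
    rw [← sub_add_cancel (f _) (f _), Set.mem_singleton_iff.mp (h j hj), ih (Nat.lt_of_succ_lt hj),
      Fin.val_mk, Fin.val_mk, succ_nsmul]
    abel

-- Steps `e` and `-e` in succession would revisit a value.
theorem StepsIn.singleton_of_injective {e : G} (h : StepsIn {e, -e} f) (hf : Injective f)
    (h1 : 1 < n) : StepsIn {f ⟨1, h1⟩ - f ⟨0, Nat.zero_lt_of_lt h1⟩} f := by
  intro j hj
  induction j with
  | zero => rfl
  | succ j ih =>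
    rw [Set.mem_singleton_iff, ← Set.mem_singleton_iff.mp (ih (Nat.lt_of_succ_lt hj))]
    have hne : f ⟨j + 1 + 1, hj⟩ ≠ f ⟨j, by omega⟩ := fun heq => by
      have := Fin.mk.inj_iff.mp (hf heq); omega
    have h₀ := h j (by omega)
    have h₁ := h (j + 1) hj
    simp only [Set.mem_insert_iff, Set.mem_singleton_iff] at h₀ h₁
    rcases h₀ with h₀ | h₀ <;> rcases h₁ with h₁ | h₁ <;>
      first
      | exact h₁.trans h₀.symm
      | exact absurd (by linear_combination (norm := abel_nf) h₀ + h₁) hne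

end Steps

theorem eq_of_sub_eq_sub_of_mem_pair {R : Type*} [CommRing R] (h2 : IsUnit (2 : R))
    {e x y z : R} (hx : x ∈ ({e, -e} : Set R)) (hy : y ∈ ({e, -e} : Set R))
    (hz : z ∈ ({e, -e} : Set R)) (h : y - x = z - y) : x = y := by
  suffices 2 * (y - x) = 0 by
    rw [h2.mul_right_eq_zero, sub_eq_zero] at this
    exact this.symm
  simp only [Set.mem_insert_iff, Set.mem_singleton_iff] at hx hy hz
  rcases hx with rfl | rfl <;> rcases hy with rfl | rfl <;> rcases hz with rfl | rfl <;>
    first | ring1 | linear_combination h | linear_combination 2 * h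

theorem exists_affine_of_stepsIn {R : Type*} [CommRing R] (h2 : IsUnit (2 : R)) {n : ℕ}
    (hn : 3 ≤ n) {e : R} {L : Fin n → Fin n → R} (hrow : ∀ i, Injective (L i))
    (hcol : ∀ j, Injective fun i => L i j) (hr : ∀ i, StepsIn {e, -e} (L i))
    (hc : ∀ j, StepsIn {e, -e} fun i => L i j) :
    ∃ s r c : R, r ∈ ({e, -e} : Set R) ∧ c ∈ ({e, -e} : Set R) ∧
      ∀ i j : Fin n, L i j = s + r * ((i : ℕ) : R) + c * ((j : ℕ) : R) := by
  set o : Fin n := ⟨0, by omega⟩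
  set l : Fin n := ⟨1, by omega⟩
  set t : Fin n := ⟨2, by omega⟩
  set c : Fin n → R := fun i => L i l - L i o
  set r : Fin n → R := fun j => L l j - L o j
  have row (i j : Fin n) : L i j = L i o + c i * (j : ℕ) := by
    rw [((hr i).singleton_of_injective (hrow i) (by omega)).eq_add_nsmul j, nsmul_eq_mul, mul_comm]
  have col (i j : Fin n) : L i j = L o j + r j * (i : ℕ) := by
    rw [((hc j).singleton_of_injective (hcol j) (by omega)).eq_add_nsmul i, nsmul_eq_mul, mul_comm]
  have hr_mem (j : Fin n) : r j ∈ ({e, -e} : Set R) := hc j 0 (by omega)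
  have hr_const : r o = r l := by
    refine eq_of_sub_eq_sub_of_mem_pair h2 (hr_mem o) (hr_mem l) (hr_mem t) ?_
    have h₀ := row o t
    have h₁ := row l t
    have ht : ((t : ℕ) : R) = 2 := by norm_num [t]
    rw [ht] at h₀ h₁
    linear_combination h₀ - h₁
  have hc_const (i : Fin n) : c i = c o := by
    linear_combination col i l - col i o - ((i : ℕ) : R) * hr_const
  refine ⟨L o o, r o, c o, hr_mem o, hr o 0 (by omega), fun i j => ?_⟩
  linear_combination row i j + col i o + ((j : ℕ) : R) * hc_const i

theorem stepsIn_of_eq_affine {R : Type*} [CommRing R] {n : ℕ} {L : Fin n → Fin n → R} {s r c : R}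
    (hL : ∀ i j : Fin n, L i j = s + r * ((i : ℕ) : R) + c * ((j : ℕ) : R)) :
    (∀ i, StepsIn {c} (L i)) ∧ ∀ j, StepsIn {r} fun i => L i j := by
  constructor <;> intro _ k hk <;>
    · simp only [Set.mem_singleton_iff, hL]
      push_cast
      ring

theorem Nat.sInf_eq_iff_of_forall_le {S : Set ℕ} {k : ℕ} (hS : S.Nonempty)
    (hle : ∀ d ∈ S, d ≤ k) : sInf S = k ↔ ∀ d ∈ S, d = k :=
  ⟨fun h d hd => le_antisymm (hle d hd) (h ▸ Nat.sInf_le hd),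
    fun h => h _ (Nat.sInf_mem hS)⟩

section ZModOdd

variable {n : ℕ}

theorem zdist_le_half (ho : Odd n) (a b : ZMod n) : zdist a b ≤ (n - 1) / 2 := by
  have : NeZero n := ⟨ho.pos.ne'⟩
  have := ZMod.val_lt (b - a)
  rw [zdist, ← neg_sub, ZMod.neg_val]
  obtain ⟨m, rfl⟩ := ho
  split_ifs <;> omega

theorem zdist_eq_half_iff (ho : Odd n) (a b : ZMod n) :
    zdist a b = (n - 1) / 2 ↔
      b - a ∈ ({(((n - 1) / 2 : ℕ) : ZMod n), -(((n - 1) / 2 : ℕ) : ZMod n)} : Set (ZMod n)) := by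
  have : NeZero n := ⟨ho.pos.ne'⟩
  have hk : (((n - 1) / 2 : ℕ) : ZMod n).val = (n - 1) / 2 :=
    ZMod.val_cast_of_lt (by have := ho.pos; omega)
  have := ZMod.val_lt (b - a)
  rw [Set.mem_insert_iff, Set.mem_singleton_iff, ← neg_eq_iff_eq_neg,
    ← (ZMod.val_injective n).eq_iff, ← (ZMod.val_injective n).eq_iff, hk, zdist, ← neg_sub,
    ZMod.neg_val]
  obtain ⟨m, rfl⟩ := ho
  split_ifs with h
  · simp [h]
  · omega

theorem natCast_succ_div_two_eq_neg (ho : Odd n) :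
    (((n + 1) / 2 : ℕ) : ZMod n) = -(((n - 1) / 2 : ℕ) : ZMod n) := by
  refine eq_neg_of_add_eq_zero_left ?_
  obtain ⟨m, rfl⟩ := ho
  rw [← Nat.cast_add, show (2 * m + 1 + 1) / 2 + (2 * m + 1 - 1) / 2 = 2 * m + 1 by omega,
    ZMod.natCast_self]

theorem innerDist_eq_half_iff (ho : Odd n) (hn : 2 ≤ n) (L : Fin n → Fin n → ZMod n) :
    innerDist n L = (n - 1) / 2 ↔
      (∀ i, StepsIn {(((n - 1) / 2 : ℕ) : ZMod n), -(((n - 1) / 2 : ℕ) : ZMod n)} (L i)) ∧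
      ∀ j, StepsIn {(((n - 1) / 2 : ℕ) : ZMod n), -(((n - 1) / 2 : ℕ) : ZMod n)}
        fun i => L i j := by
  unfold innerDist
  rw [Nat.sInf_eq_iff_of_forall_le ⟨_, Or.inl ⟨⟨0, by omega⟩, 0, by omega, rfl⟩⟩
    (by rintro d (⟨i, j, hj, rfl⟩ | ⟨j, i, hi, rfl⟩) <;> exact zdist_le_half ho _ _)]
  refine ⟨fun h => ⟨fun i j hj => (zdist_eq_half_iff ho _ _).1 (h _ (.inl ⟨i, j, hj, rfl⟩)),
    fun j i hi => (zdist_eq_half_iff ho _ _).1 (h _ (.inr ⟨j, i, hi, rfl⟩))⟩, ?_⟩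
  rintro ⟨hrow, hcol⟩ d (⟨i, j, hj, rfl⟩ | ⟨j, i, hi, rfl⟩)
  · exact (zdist_eq_half_iff ho _ _).2 (hrow i j hj)
  · exact (zdist_eq_half_iff ho _ _).2 (hcol j i hi)

end ZModOdd

theorem stmt2 (n : ℕ) (hn : 3 ≤ n) (ho : Odd n) (L : Fin n → Fin n → ZMod n)
    (hL : IsLatin n L) :
    innerDist n L = (n - 1) / 2 ↔
      ∃ s r c : ZMod n,
        (r = (((n - 1) / 2 : ℕ) : ZMod n) ∨ r = (((n + 1) / 2 : ℕ) : ZMod n)) ∧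
        (c = (((n - 1) / 2 : ℕ) : ZMod n) ∨ c = (((n + 1) / 2 : ℕ) : ZMod n)) ∧
        ∀ i j : Fin n, L i j = s + r * ((i : ℕ) : ZMod n) + c * ((j : ℕ) : ZMod n) := by
  rw [innerDist_eq_half_iff ho (by omega), natCast_succ_div_two_eq_neg ho]
  constructor
  · rintro ⟨hrow, hcol⟩
    have h2 : IsUnit (2 : ZMod n) := by
      exact_mod_cast (ZMod.isUnit_iff_coprime 2 n).mpr ho.coprime_two_left
    exact exists_affine_of_stepsIn h2 hn hL.1 hL.2 hrow hcol
  · rintro ⟨s, r, c, hr, hc, haff⟩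
    obtain ⟨hrow, hcol⟩ := stepsIn_of_eq_affine haff
    exact ⟨fun i => (hrow i).mono (Set.singleton_subset_iff.mpr hc),
      fun j => (hcol j).mono (Set.singleton_subset_iff.mpr hr)⟩
end

section
/- Let n ≥ 3. For every integer k with 1 ≤ k ≤ ⌊(n−1)/2⌋ there exists an order-n Latin square whose inner distance equals exactly k. -/
section zdist

variable {n : ℕ}

lemma zdist_add_left (x a b : ZMod n) : zdist (x + a) (x + b) = zdist a b := by
  simp only [zdist, add_sub_add_left_eq_sub]

lemma zdist_add_right (x a b : ZMod n) : zdist (a + x) (b + x) = zdist a b := by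
  simp only [zdist, add_sub_add_right_eq_sub]

lemma zdist_self_add_natCast (a : ZMod n) {c : ℕ} (hc₀ : 0 < c) (hc : c < n) :
    zdist a (a + c) = min (n - c) c := by
  have hc' : (c : ZMod n) ≠ 0 := by
    rw [Ne, ZMod.natCast_eq_zero_iff]
    exact Nat.not_dvd_of_pos_of_lt hc₀ hc
  have : NeZero n := ⟨by omega⟩
  rw [zdist, sub_add_cancel_left, add_sub_cancel_left, ZMod.neg_val, if_neg hc',
    ZMod.val_natCast_of_lt hc]

end zdist

section addSquare

variable {n : ℕ}

def addSquare (n : ℕ) (f : ℕ → ZMod n) : Fin n → Fin n → ZMod n := fun i j => f i + f j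

lemma isLatin_addSquare {f : ℕ → ZMod n} (hf : Set.InjOn f (Set.Iio n)) :
    IsLatin n (addSquare n f) :=
  ⟨fun _ j₁ j₂ h => Fin.ext (hf j₁.isLt j₂.isLt (add_left_cancel h)),
    fun _ i₁ i₂ h => Fin.ext (hf i₁.isLt i₂.isLt (add_right_cancel h))⟩

lemma innerDist_addSquare (hn : 0 < n) (f : ℕ → ZMod n) :
    innerDist n (addSquare n f) = sInf {d | ∃ t, t + 1 < n ∧ d = zdist (f t) (f (t + 1))} := by
  refine congrArg sInf (Set.ext fun d => ?_)
  simp only [addSquare, zdist_add_left, zdist_add_right, Set.mem_ofPred_eq]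
  constructor
  · rintro (⟨-, t, ht, rfl⟩ | ⟨-, t, ht, rfl⟩) <;> exact ⟨t, ht, rfl⟩
  · rintro ⟨t, ht, rfl⟩
    exact Or.inl ⟨⟨0, hn⟩, t, ht, rfl⟩

end addSquare

section strideSeq

variable {n k : ℕ}

def strideSeq (n k t : ℕ) : ZMod n := (k * t + t / (n / n.gcd k) : ℕ)

lemma strideSeq_injOn (n k : ℕ) : Set.InjOn (strideSeq n k) (Set.Iio n) := by
  intro s hs t ht h
  set d := n.gcd k
  set m := n / d
  have hn : 0 < n := lt_of_le_of_lt (Nat.zero_le s) hs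
  have hmd : n = m * d := (Nat.div_mul_cancel (Nat.gcd_dvd_left n k)).symm
  have h : k * s + s / m ≡ k * t + t / m [MOD n] := (ZMod.natCast_eq_natCast_iff _ _ _).mp h
  -- Reducing modulo `d ∣ k` isolates the coset index `⌊· / m⌋`, which is `< d`.
  have hk : ∀ u, k * u ≡ 0 [MOD d] := fun u =>
    Nat.modEq_zero_iff_dvd.mpr (dvd_mul_of_dvd_left (Nat.gcd_dvd_right n k) u)
  have hquot : s / m = t / m := by
    refine Nat.ModEq.eq_of_lt_of_lt ?_ (Nat.div_lt_of_lt_mul (hmd ▸ hs))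
      (Nat.div_lt_of_lt_mul (hmd ▸ ht))
    exact Nat.ModEq.add_left_cancel ((hk s).trans (hk t).symm) (h.of_dvd (Nat.gcd_dvd_left n k))
  rw [hquot] at h
  have hrem : s % m = t % m := (Nat.ModEq.add_right_cancel' _ h).cancel_left_div_gcd hn
  rw [← Nat.div_add_mod s m, ← Nat.div_add_mod t m, hquot, hrem]

lemma strideSeq_succ (t : ℕ) :
    strideSeq n k (t + 1) =
      strideSeq n k t + ((k + if n / n.gcd k ∣ t + 1 then 1 else 0 : ℕ) : ZMod n) := by
  simp only [strideSeq, Nat.succ_div]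
  push_cast
  ring

lemma two_le_div_gcd (hk₁ : 1 ≤ k) (hk : 2 * k < n) : 2 ≤ n / n.gcd k := by
  have hd : n.gcd k ≤ k := Nat.le_of_dvd hk₁ (Nat.gcd_dvd_right n k)
  exact (Nat.le_div_iff_mul_le (Nat.gcd_pos_of_pos_right n hk₁)).mpr (by omega)

lemma zdist_strideSeq_zero_one (hk₁ : 1 ≤ k) (hk : 2 * k < n) :
    zdist (strideSeq n k 0) (strideSeq n k 1) = k := by
  have hm := two_le_div_gcd hk₁ hk
  rw [strideSeq_succ, zero_add, if_neg (Nat.not_dvd_of_pos_of_lt one_pos (by omega)),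
    zdist_self_add_natCast _ (by omega) (by omega)]
  omega

lemma le_zdist_strideSeq_succ (hk₁ : 1 ≤ k) (hk : 2 * k < n) (t : ℕ) :
    k ≤ zdist (strideSeq n k t) (strideSeq n k (t + 1)) := by
  rw [strideSeq_succ]
  split_ifs <;> rw [zdist_self_add_natCast _ (by omega) (by omega)] <;> omega

end strideSeq

theorem stmt4_general (n : ℕ) (k : ℕ) (hk1 : 1 ≤ k) (hk2 : k ≤ (n - 1) / 2) :
    ∃ L : Fin n → Fin n → ZMod n, IsLatin n L ∧ innerDist n L = k := by
  have hk : 2 * k < n := by omega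
  refine ⟨addSquare n (strideSeq n k), isLatin_addSquare (strideSeq_injOn n k), ?_⟩
  rw [innerDist_addSquare (by omega)]
  refine IsLeast.csInf_eq ⟨⟨0, by omega, (zdist_strideSeq_zero_one hk1 hk).symm⟩, ?_⟩
  rintro d ⟨t, -, rfl⟩
  exact le_zdist_strideSeq_succ hk1 hk t

theorem stmt4 (n : ℕ) (hn : 3 ≤ n) (k : ℕ) (hk1 : 1 ≤ k) (hk2 : k ≤ (n - 1) / 2) :
    ∃ L : Fin n → Fin n → ZMod n, IsLatin n L ∧ innerDist n L = k :=
  stmt4_general n k hk1 hk2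
end

section
/- Let n ≥ 6 be even and let r, r' : Fin n → ZMod n be two injective functions with r(j) ≠ r'(j) for all j, such that dist(r(j+1), r(j)) ≥ n/2 − 1 and dist(r'(j+1), r'(j)) ≥ n/2 − 1 for all 0 ≤ j ≤ n−2, and dist(r(j), r'(j)) ≥ n/2 − 1 for all j. Define integers ε_j = (r(j+1) − r(j)).val − n/2 and ε'_j = (r'(j+1) − r'(j)).val − n/2 for 0 ≤ j ≤ n−2, and h = (r(0) − r(n−1)).val − n/2, h' = (r'(0) − r'(n−1)).val − n/2. Then for all 0 ≤ j₁ ≤ j₂ ≤ n−2 one has |∑_{j=j₁}^{j₂} (ε'_j − ε_j)| ≤ 2; moreover |h − h'| ≤ 2, or |h| = n/2 − 1 and h' = −h. -/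
/-- The signed extended difference `ε_j = (r (j+1) - r j).val - n/2` (as an integer). -/
def eps (n : ℕ) (r : Fin n → ZMod n) (j : Fin (n - 1)) : ℤ :=
  ((r ⟨(j : ℕ) + 1, by have := j.isLt; omega⟩ -
      r ⟨(j : ℕ), by have := j.isLt; omega⟩).val : ℤ) - ((n / 2 : ℕ) : ℤ)

/-- The signed final difference `h = (r 0 - r (n-1)).val - n/2` (as an integer). -/
def hlast (n : ℕ) (r : Fin n → ZMod n) (hn : 0 < n) : ℤ :=
  ((r ⟨0, hn⟩ - r ⟨n - 1, by omega⟩).val : ℤ) - ((n / 2 : ℕ) : ℤ)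

/-!
All entries of the rectangle are read through their deviations from `n/2`: the horizontal ones
`ε_j`, `ε'_j` and the vertical ones `(r' k - r k).val - n/2`, all of absolute value at most `1`.
Around each `2 × 2` square the horizontal and vertical differences of deviations are congruent
modulo `n` and have absolute value at most `2`, so they are equal as integers once `n > 4`.
Hence `ε'_j - ε_j` is a difference of consecutive vertical deviations, and the sum telescopes.
For the wrap-around square only `|h|, |h'| ≤ n/2 - 1` is known, so the congruence leaves room
for an error of `± n`, which forces the exceptional case `|h| = n/2 - 1`, `h' = -h`.
-/

open Finset

theorem Fin.sum_Icc_sub_of_le {k : ℕ} {M : Type*} [AddCommGroup M] (f : ℕ → M)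
    {j₁ j₂ : Fin k} (h : j₁ ≤ j₂) :
    ∑ j ∈ Icc j₁ j₂, (f (j + 1) - f j) = f (j₂ + 1) - f j₁ := by
  have := Finset.sum_Icc_sub (Fin.le_iff_val_le_val.mp h) f
  rwa [← Fin.map_valEmbedding_Icc, sum_map] at this

theorem eq_of_intCast_zmod_eq {n : ℕ} {x y : ℤ} (h : (x : ZMod n) = y) (hlt : |x - y| < n) :
    x = y := by
  have hdvd := (ZMod.intCast_eq_intCast_iff_dvd_sub x y n).mp h
  have := Int.eq_zero_of_abs_lt_dvd hdvd (by rwa [abs_sub_comm])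
  omega

theorem abs_sub_le_two_or_of_intCast_eq {n m : ℕ} (hm : n = 2 * m) {h h' d : ℤ}
    (hh : |h| ≤ m - 1) (hh' : |h'| ≤ m - 1) (hd : |d| ≤ 2)
    (hmod : ((h' - h : ℤ) : ZMod n) = d) :
    |h - h'| ≤ 2 ∨ (|h| = m - 1 ∧ h' = -h) := by
  have hdvd := (ZMod.intCast_eq_intCast_iff_dvd_sub _ _ n).mp hmod
  rw [abs_le] at hh hh' hd
  -- `d - (h' - h)` is a multiple of `n = 2 m` lying in `[-n, n]`, so it is `-n`, `0` or `n`.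
  rcases lt_trichotomy (d - (h' - h)) 0 with hneg | hzero | hpos
  · have := Int.eq_zero_of_abs_lt_dvd (dvd_add hdvd (dvd_refl (n : ℤ)))
      (by rw [abs_lt]; omega)
    right
    rw [abs_eq (by omega)]
    omega
  · left
    rw [abs_le]
    omega
  · have := Int.eq_zero_of_abs_lt_dvd (dvd_sub hdvd (dvd_refl (n : ℤ)))
      (by rw [abs_lt]; omega)
    right
    rw [abs_eq (by omega)]
    omega

section ZModDist

variable {n : ℕ}

theorem zdist_comm (a b : ZMod n) : zdist a b = zdist b a := min_comm _ _

theorem zdist_le_val_sub (a b : ZMod n) : zdist a b ≤ (a - b).val := min_le_left _ _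

theorem val_sub_add_zdist_le [NeZero n] (a b : ZMod n) : (a - b).val + zdist a b ≤ n := by
  rcases eq_or_ne (a - b) 0 with h | h
  · have := zdist_le_val_sub a b
    simp only [h, ZMod.val_zero] at this ⊢
    omega
  · have : NeZero (a - b) := ⟨h⟩
    have hneg : (b - a).val = n - (a - b).val := by rw [← neg_sub, ZMod.val_neg_of_ne_zero]
    have := ZMod.val_lt (a - b)
    have := min_le_right (a - b).val (b - a).val
    unfold zdist
    omega

theorem abs_val_sub_sub_le_one [NeZero n] {m : ℕ} (hm : n = 2 * m) {a b : ZMod n}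
    (h : m - 1 ≤ zdist a b) : |((a - b).val : ℤ) - m| ≤ 1 := by
  have := zdist_le_val_sub a b
  have := val_sub_add_zdist_le a b
  rw [abs_le]
  omega

theorem intCast_val_sub_sub_val_sub [NeZero n] (a b a' b' : ZMod n) :
    ((((b' - a').val : ℤ) - (b - a).val : ℤ) : ZMod n) =
      (((b' - b).val : ℤ) - (a' - a).val : ℤ) := by
  push_cast
  simp only [ZMod.natCast_zmod_val]
  ring

theorem val_sub_sub_val_sub_eq [NeZero n] {m : ℕ} (hm : n = 2 * m) (hm3 : 3 ≤ m)
    {a b a' b' : ZMod n} (hab : m - 1 ≤ zdist b a) (ha'b' : m - 1 ≤ zdist b' a')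
    (haa' : m - 1 ≤ zdist a a') (hbb' : m - 1 ≤ zdist b b') :
    ((b' - a').val : ℤ) - (b - a).val = (b' - b).val - (a' - a).val := by
  rw [zdist_comm] at haa' hbb'
  refine eq_of_intCast_zmod_eq (intCast_val_sub_sub_val_sub a b a' b') ?_
  have := abs_val_sub_sub_le_one hm hab
  have := abs_val_sub_sub_le_one hm ha'b'
  have := abs_val_sub_sub_le_one hm haa'
  have := abs_val_sub_sub_le_one hm hbb'
  rw [abs_le] at *
  rw [abs_lt]
  omega

end ZModDist

/-- The vertical deviation of column `k`, extended by `0` beyond the last column so that it can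
be telescoped over `ℕ`. -/
def colEps (n : ℕ) (r r' : Fin n → ZMod n) (k : ℕ) : ℤ :=
  if hk : k < n then ((r' ⟨k, hk⟩ - r ⟨k, hk⟩).val : ℤ) - ((n / 2 : ℕ) : ℤ) else 0

section LatinRectangle

variable {n : ℕ} {r r' : Fin n → ZMod n}

theorem abs_colEps_le_one (he : Even n) (hcol : ∀ j : Fin n, n / 2 - 1 ≤ zdist (r j) (r' j))
    (k : ℕ) : |colEps n r r' k| ≤ 1 := by
  unfold colEps
  split_ifs with hk
  · have : NeZero n := ⟨by omega⟩
    exact abs_val_sub_sub_le_one (Nat.two_mul_div_two_of_even he).symm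
      (zdist_comm (r _) _ ▸ hcol _)
  · simp

theorem eps_sub_eps_eq_colEps_sub (hn : 6 ≤ n) (he : Even n)
    (hrow : ∀ j : ℕ, ∀ hj : j + 1 < n,
      n / 2 - 1 ≤ zdist (r ⟨j + 1, hj⟩) (r ⟨j, Nat.lt_of_succ_lt hj⟩))
    (hrow' : ∀ j : ℕ, ∀ hj : j + 1 < n,
      n / 2 - 1 ≤ zdist (r' ⟨j + 1, hj⟩) (r' ⟨j, Nat.lt_of_succ_lt hj⟩))
    (hcol : ∀ j : Fin n, n / 2 - 1 ≤ zdist (r j) (r' j)) (j : Fin (n - 1)) :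
    eps n r' j - eps n r j = colEps n r r' (j + 1) - colEps n r r' j := by
  have : NeZero n := ⟨by omega⟩
  have hj : (j : ℕ) + 1 < n := by omega
  have hsquare := val_sub_sub_val_sub_eq (Nat.two_mul_div_two_of_even he).symm (by omega)
    (hrow j hj) (hrow' j hj) (hcol ⟨j, by omega⟩) (hcol ⟨j + 1, hj⟩)
  simp only [eps, colEps, dif_pos hj, dif_pos (by omega : (j : ℕ) < n)]
  omega

theorem abs_hlast_le [NeZero n] (he : Even n) (hr : Function.Injective r) :
    |hlast n r (NeZero.pos n)| ≤ ((n / 2 : ℕ) : ℤ) - 1 := by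
  have h2 : 2 ≤ n := by obtain ⟨k, hk⟩ := he; have := NeZero.ne n; omega
  have hne : r ⟨0, NeZero.pos n⟩ ≠ r ⟨n - 1, by omega⟩ :=
    hr.ne (by rw [Ne, Fin.mk.injEq]; omega)
  have hval : (r ⟨0, NeZero.pos n⟩ - r ⟨n - 1, by omega⟩).val ≠ 0 := by
    rwa [Ne, ZMod.val_eq_zero, sub_eq_zero]
  have := ZMod.val_lt (r ⟨0, NeZero.pos n⟩ - r ⟨n - 1, by omega⟩)
  have := Nat.two_mul_div_two_of_even he
  unfold hlast
  rw [abs_le]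
  omega

theorem intCast_hlast_sub_hlast [NeZero n] :
    ((hlast n r' (NeZero.pos n) - hlast n r (NeZero.pos n) : ℤ) : ZMod n) =
      ((colEps n r r' 0 - colEps n r r' (n - 1) : ℤ) : ZMod n) := by
  have hn := NeZero.pos n
  have h := intCast_val_sub_sub_val_sub (r ⟨n - 1, by omega⟩) (r ⟨0, hn⟩)
    (r' ⟨n - 1, by omega⟩) (r' ⟨0, hn⟩)
  simp only [hlast, colEps, dif_pos hn, dif_pos (by omega : n - 1 < n)]
  convert h using 2 <;> ring

end LatinRectangle

theorem stmt15 (n : ℕ) (hn : 6 ≤ n) (he : Even n)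
    (r r' : Fin n → ZMod n)
    (hr : Function.Injective r) (hr' : Function.Injective r')
    (hrow : ∀ j : ℕ, ∀ hj : j + 1 < n,
      n / 2 - 1 ≤ zdist (r ⟨j + 1, hj⟩) (r ⟨j, Nat.lt_of_succ_lt hj⟩))
    (hrow' : ∀ j : ℕ, ∀ hj : j + 1 < n,
      n / 2 - 1 ≤ zdist (r' ⟨j + 1, hj⟩) (r' ⟨j, Nat.lt_of_succ_lt hj⟩))
    (hcol : ∀ j : Fin n, n / 2 - 1 ≤ zdist (r j) (r' j)) :
    (∀ j₁ j₂ : Fin (n - 1), j₁ ≤ j₂ →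
      |∑ j ∈ Finset.Icc j₁ j₂, (eps n r' j - eps n r j)| ≤ 2) ∧
    (|hlast n r (by omega) - hlast n r' (by omega)| ≤ 2 ∨
      (|hlast n r (by omega)| = ((n / 2 : ℕ) : ℤ) - 1 ∧
        hlast n r' (by omega) = - hlast n r (by omega))) := by
  have : NeZero n := ⟨by omega⟩
  have hcolEps := abs_colEps_le_one he hcol
  refine ⟨fun j₁ j₂ h12 => ?_, ?_⟩
  · rw [sum_congr rfl fun j _ => eps_sub_eps_eq_colEps_sub hn he hrow hrow' hcol j,
      Fin.sum_Icc_sub_of_le _ h12]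
    linarith [abs_sub (colEps n r r' (j₂ + 1)) (colEps n r r' j₁), hcolEps (j₂ + 1),
      hcolEps j₁]
  · refine abs_sub_le_two_or_of_intCast_eq (Nat.two_mul_div_two_of_even he).symm
      (abs_hlast_le he hr) (abs_hlast_le he hr') ?_ intCast_hlast_sub_hlast
    linarith [abs_sub (colEps n r r' 0) (colEps n r r' (n - 1)), hcolEps 0, hcolEps (n - 1)]
end
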